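/- arXiv:1110.5681 — 2 statements merged into one kernel-verified Lean document; each statement's English description precedes it below -/
import Mathlib

section
/- For any complex numbers a, b, c, α, γ, the operator U_II = a·(I ⊗ I) + b·(T ⊗ I + I ⊗ T) + c·(T ⊗ T), with T the 2×2 matrix with rows (0, 1) and (γ, −α), satisfies edge commutativity on three qubits: (U_II ⊗ I)·(I ⊗ U_II) = (I ⊗ U_II)·(U_II ⊗ I) (consistency condition C3 for the second family of solutions). -/
open Matrix Kronecker

/-- The matrix `T` with rows `(0, 1)` and `(γ, −α)`. -/
def Tmat (α γ : ℂ) : Matrix (Fin 2) (Fin 2) ℂ := !![0, 1; γ, -α]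

/-- The second family of edge operators:
`U_II = a (I⊗I) + b (T⊗I + I⊗T) + c (T⊗T)`. -/
def UII (a b c α γ : ℂ) : Matrix (Fin 2 × Fin 2) (Fin 2 × Fin 2) ℂ :=
  a • ((1 : Matrix (Fin 2) (Fin 2) ℂ) ⊗ₖ (1 : Matrix (Fin 2) (Fin 2) ℂ)) +
    b • (Tmat α γ ⊗ₖ (1 : Matrix (Fin 2) (Fin 2) ℂ)) +
    b • ((1 : Matrix (Fin 2) (Fin 2) ℂ) ⊗ₖ Tmat α γ) +
    c • (Tmat α γ ⊗ₖ Tmat α γ)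

/-- Key fact: `X ⊗ (Y ⊗ 1)` and `1 ⊗ (X' ⊗ Y')` commute as soon as the middle
factors `Y` and `X'` commute. -/
lemma core (X Y X' Y' : Matrix (Fin 2) (Fin 2) ℂ) (h : Y * X' = X' * Y) :
    (X ⊗ₖ (Y ⊗ₖ (1 : Matrix (Fin 2) (Fin 2) ℂ))) *
      ((1 : Matrix (Fin 2) (Fin 2) ℂ) ⊗ₖ (X' ⊗ₖ Y')) =
    ((1 : Matrix (Fin 2) (Fin 2) ℂ) ⊗ₖ (X' ⊗ₖ Y')) *
      (X ⊗ₖ (Y ⊗ₖ (1 : Matrix (Fin 2) (Fin 2) ℂ))) := by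
  simp only [← Matrix.mul_kronecker_mul, Matrix.one_mul, Matrix.mul_one, h]

/-- `U_II` satisfies edge commutativity (condition C3) on three qubits:
`(U_II ⊗ I) (I ⊗ U_II) = (I ⊗ U_II) (U_II ⊗ I)`. -/
theorem UII_edge_comm (a b c α γ : ℂ) :
    (Matrix.reindex (Equiv.prodAssoc (Fin 2) (Fin 2) (Fin 2))
        (Equiv.prodAssoc (Fin 2) (Fin 2) (Fin 2))
        (UII a b c α γ ⊗ₖ (1 : Matrix (Fin 2) (Fin 2) ℂ))) *
      ((1 : Matrix (Fin 2) (Fin 2) ℂ) ⊗ₖ UII a b c α γ) =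
    ((1 : Matrix (Fin 2) (Fin 2) ℂ) ⊗ₖ UII a b c α γ) *
      (Matrix.reindex (Equiv.prodAssoc (Fin 2) (Fin 2) (Fin 2))
        (Equiv.prodAssoc (Fin 2) (Fin 2) (Fin 2))
        (UII a b c α γ ⊗ₖ (1 : Matrix (Fin 2) (Fin 2) ℂ))) := by
  set T := Tmat α γ with hT
  set I2 : Matrix (Fin 2) (Fin 2) ℂ := 1 with hI
  have h1 : Matrix.reindex (Equiv.prodAssoc (Fin 2) (Fin 2) (Fin 2))
        (Equiv.prodAssoc (Fin 2) (Fin 2) (Fin 2)) (UII a b c α γ ⊗ₖ I2) =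
      a • (I2 ⊗ₖ (I2 ⊗ₖ I2)) + b • (T ⊗ₖ (I2 ⊗ₖ I2)) + b • (I2 ⊗ₖ (T ⊗ₖ I2)) +
        c • (T ⊗ₖ (T ⊗ₖ I2)) := by
    simp only [UII, Matrix.add_kronecker, Matrix.smul_kronecker, Matrix.reindex_apply,
      Matrix.submatrix_add, Matrix.submatrix_smul, Pi.add_apply, Pi.smul_apply,
      Matrix.kronecker_assoc', ← hT, ← hI]
  have h2 : (I2 ⊗ₖ UII a b c α γ) =
      a • (I2 ⊗ₖ (I2 ⊗ₖ I2)) + b • (I2 ⊗ₖ (T ⊗ₖ I2)) + b • (I2 ⊗ₖ (I2 ⊗ₖ T)) +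
        c • (I2 ⊗ₖ (T ⊗ₖ T)) := by
    simp only [UII, Matrix.kronecker_add, Matrix.kronecker_smul, ← hT, ← hI]
  rw [h1, h2]
  simp only [add_mul, mul_add, smul_mul_assoc, mul_smul_comm]
  rw [core I2 I2 I2 I2 rfl, core I2 I2 T I2 (by simp [hI]),
    core I2 I2 I2 T (by simp [hI]),
    core I2 I2 T T (by simp [hI]),
    core T I2 I2 I2 rfl, core T I2 T I2 (by simp [hI]),
    core T I2 I2 T (by simp [hI]),
    core T I2 T T (by simp [hI]),
    core I2 T I2 I2 (by simp [hI]),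
    core I2 T T I2 rfl, core I2 T I2 T (by simp [hI]),
    core I2 T T T rfl,
    core T T I2 I2 (by simp [hI]),
    core T T T I2 rfl, core T T I2 T (by simp [hI]),
    core T T T T rfl]
  module
end

section
/- Any directed edge operator yields an undirected edge operator: let V be a complex matrix on ℂᵈ⊗ℂᵈ and V' = S·V·S its swapped version. Assume the directed consistency conditions: (D2) V·V' = V'·V; and on three qudits, (D3a) (V⊗I)·(I⊗V) = (I⊗V)·(V⊗I), (D3b) (V⊗I)·(I⊗V') = (I⊗V')·(V⊗I), and (D3c) (V'⊗I)·(I⊗V) = (I⊗V)·(V'⊗I). Then U := V·V' satisfies the undirected consistency conditions: U commutes with the swap S (C2), and (U⊗I)·(I⊗U) = (I⊗U)·(U⊗I) (C3). -/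
open Matrix Kronecker

/-- The swap operator on two qudits. -/
def swapOpD (d : ℕ) : Matrix (Fin d × Fin d) (Fin d × Fin d) ℂ :=
  fun p q => if p.1 = q.2 ∧ p.2 = q.1 then 1 else 0

/-- `W ⊗ I` acting on qudits 1,2 of three qudits (reindexed to match `I ⊗ W`). -/
def opOn12 (d : ℕ) (W : Matrix (Fin d × Fin d) (Fin d × Fin d) ℂ) :
    Matrix (Fin d × Fin d × Fin d) (Fin d × Fin d × Fin d) ℂ :=
  Matrix.reindex (Equiv.prodAssoc (Fin d) (Fin d) (Fin d))
    (Equiv.prodAssoc (Fin d) (Fin d) (Fin d)) (W ⊗ₖ (1 : Matrix (Fin d) (Fin d) ℂ))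

/-- `I ⊗ W` acting on qudits 2,3 of three qudits. -/
def opOn23 (d : ℕ) (W : Matrix (Fin d × Fin d) (Fin d × Fin d) ℂ) :
    Matrix (Fin d × Fin d × Fin d) (Fin d × Fin d × Fin d) ℂ :=
  (1 : Matrix (Fin d) (Fin d) ℂ) ⊗ₖ W

/-! Conjugating by the swap turns `W ⊗ I` on qudits `(a, b, c)` into `I ⊗ W` on `(c, b, a)`,
so the relation (D3a) for `V` transfers to `V'`. With (D3b) and (D3c), every factor of
`U ⊗ I = (V ⊗ I)(V' ⊗ I)` then commutes with every factor of `I ⊗ U = (I ⊗ V)(I ⊗ V')`.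
For (C2), `S U S = V' V`, which is `U` by (D2). -/

lemma swapOpD_eq_toMatrix (d : ℕ) :
    swapOpD d = (Equiv.prodComm (Fin d) (Fin d)).toPEquiv.toMatrix := by
  ext ⟨i, j⟩ ⟨k, l⟩
  simp [swapOpD, PEquiv.toMatrix_apply, Equiv.toPEquiv, Prod.ext_iff, and_comm]

lemma swapOpD_mul_mul_swapOpD (d : ℕ) (W : Matrix (Fin d × Fin d) (Fin d × Fin d) ℂ) :
    swapOpD d * W * swapOpD d = W.submatrix Prod.swap Prod.swap := by
  rw [swapOpD_eq_toMatrix, PEquiv.toMatrix_toPEquiv_mul, PEquiv.mul_toMatrix_toPEquiv]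
  rfl

lemma swapOpD_mul_swapOpD (d : ℕ) : swapOpD d * swapOpD d = 1 := by
  simpa using swapOpD_mul_mul_swapOpD d 1 |>.trans (submatrix_one Prod.swap Prod.swap_injective)

lemma opOn12_mul (d : ℕ) (A B : Matrix (Fin d × Fin d) (Fin d × Fin d) ℂ) :
    opOn12 d (A * B) = opOn12 d A * opOn12 d B := by
  simp only [opOn12, reindex_apply, submatrix_mul_equiv, ← mul_kronecker_mul, mul_one]

lemma opOn23_mul (d : ℕ) (A B : Matrix (Fin d × Fin d) (Fin d × Fin d) ℂ) :
    opOn23 d (A * B) = opOn23 d A * opOn23 d B := by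
  simp only [opOn23, ← mul_kronecker_mul, mul_one]

def reverseQudits (α : Type*) : α × α × α ≃ α × α × α where
  toFun p := (p.2.2, p.2.1, p.1)
  invFun p := (p.2.2, p.2.1, p.1)

lemma opOn12_swapConj (d : ℕ) (W : Matrix (Fin d × Fin d) (Fin d × Fin d) ℂ) :
    opOn12 d (swapOpD d * W * swapOpD d) =
      (opOn23 d W).submatrix (reverseQudits _) (reverseQudits _) := by
  rw [swapOpD_mul_mul_swapOpD]
  ext ⟨a, b, c⟩ ⟨a', b', c'⟩
  simp [opOn12, opOn23, reverseQudits, Matrix.one_apply, mul_comm]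

lemma opOn23_swapConj (d : ℕ) (W : Matrix (Fin d × Fin d) (Fin d × Fin d) ℂ) :
    opOn23 d (swapOpD d * W * swapOpD d) =
      (opOn12 d W).submatrix (reverseQudits _) (reverseQudits _) := by
  rw [swapOpD_mul_mul_swapOpD]
  ext ⟨a, b, c⟩ ⟨a', b', c'⟩
  simp [opOn12, opOn23, reverseQudits, Matrix.one_apply, mul_comm]

lemma Commute.opOn_swapConj {d : ℕ} {W : Matrix (Fin d × Fin d) (Fin d × Fin d) ℂ}
    (h : Commute (opOn12 d W) (opOn23 d W)) :
    Commute (opOn12 d (swapOpD d * W * swapOpD d)) (opOn23 d (swapOpD d * W * swapOpD d)) := by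
  simp only [Commute, SemiconjBy, opOn12_swapConj, opOn23_swapConj, submatrix_mul_equiv, h.eq]

lemma commute_swapOpD_of_swapConj_eq {d : ℕ} {U : Matrix (Fin d × Fin d) (Fin d × Fin d) ℂ}
    (h : swapOpD d * U * swapOpD d = U) : Commute U (swapOpD d) := by
  calc U * swapOpD d = swapOpD d * U * (swapOpD d * swapOpD d) := by
        rw [← mul_assoc, h]
    _ = swapOpD d * U := by rw [swapOpD_mul_swapOpD, mul_one]

theorem directed_gives_undirected_general (d : ℕ)
    (V : Matrix (Fin d × Fin d) (Fin d × Fin d) ℂ)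
    (hD2 : V * (swapOpD d * V * swapOpD d) = (swapOpD d * V * swapOpD d) * V)
    (hD3a : opOn12 d V * opOn23 d V = opOn23 d V * opOn12 d V)
    (hD3b : opOn12 d V * opOn23 d (swapOpD d * V * swapOpD d) =
      opOn23 d (swapOpD d * V * swapOpD d) * opOn12 d V)
    (hD3c : opOn12 d (swapOpD d * V * swapOpD d) * opOn23 d V =
      opOn23 d V * opOn12 d (swapOpD d * V * swapOpD d)) :
    (V * (swapOpD d * V * swapOpD d)) * swapOpD d =
        swapOpD d * (V * (swapOpD d * V * swapOpD d)) ∧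
      opOn12 d (V * (swapOpD d * V * swapOpD d)) *
          opOn23 d (V * (swapOpD d * V * swapOpD d)) =
        opOn23 d (V * (swapOpD d * V * swapOpD d)) *
          opOn12 d (V * (swapOpD d * V * swapOpD d)) := by
  set S := swapOpD d
  set V' := S * V * S
  have hS : S * S = 1 := swapOpD_mul_swapOpD d
  have hU' : S * (V * V') * S = V' * V := by
    simp only [V', mul_assoc, hS, mul_one]
  refine ⟨commute_swapOpD_of_swapConj_eq (hU'.trans hD2.symm), ?_⟩
  rw [opOn12_mul, opOn23_mul]
  exact ((Commute.mul_right hD3a hD3b).mul_left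
    (Commute.mul_right hD3c (Commute.opOn_swapConj hD3a)))

/-- A directed edge operator satisfying D2–D3 yields an undirected edge operator
`U = V V'` satisfying C2 and C3. -/
theorem directed_gives_undirected (d : ℕ) (hd : 1 ≤ d)
    (V : Matrix (Fin d × Fin d) (Fin d × Fin d) ℂ)
    (hD2 : V * (swapOpD d * V * swapOpD d) = (swapOpD d * V * swapOpD d) * V)
    (hD3a : opOn12 d V * opOn23 d V = opOn23 d V * opOn12 d V)
    (hD3b : opOn12 d V * opOn23 d (swapOpD d * V * swapOpD d) =
      opOn23 d (swapOpD d * V * swapOpD d) * opOn12 d V)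
    (hD3c : opOn12 d (swapOpD d * V * swapOpD d) * opOn23 d V =
      opOn23 d V * opOn12 d (swapOpD d * V * swapOpD d)) :
    (V * (swapOpD d * V * swapOpD d)) * swapOpD d =
        swapOpD d * (V * (swapOpD d * V * swapOpD d)) ∧
      opOn12 d (V * (swapOpD d * V * swapOpD d)) *
          opOn23 d (V * (swapOpD d * V * swapOpD d)) =
        opOn23 d (V * (swapOpD d * V * swapOpD d)) *
          opOn12 d (V * (swapOpD d * V * swapOpD d)) :=
  directed_gives_undirected_general d V hD2 hD3a hD3b hD3c
end
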